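/- Assume λ₁ ≠ 0. Then x_n + z_n > 0 for all n ≥ 0 in the symmetric 2q-state broadcast model. (Equivalently: if x_n + z_n = 0 for some n, then λ₁ = 0.) -/

import Mathlib

/-!
Write `a i j = ∑_A p_i(A) p_j(A) / s(A)` with `s = ∑_k p_k`. Since
`∑_A s(A) (post_i(A) - post_j(A))² = a i i + a j j - 2 a i j`, this quadratic form is nonnegative
and vanishes only when `p_i = p_j`. The symmetry of the model makes `a 0 j` depend only on whether
`j = 0`, `j` lies in the category of `0`, or in the other one; with the row sum
`∑_j a 0 j = 1/(2q)` this gives `x + z = 2(q-1)(a 0 0 - a 0 1)`. If this vanished, the roots `0`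
and `1` would induce the same leaf law, so rows `0` and `1` of `M^n` would agree; but `e₀ - e₁`
is a left eigenvector of `M` with eigenvalue `λ₁ = p₀ - p₁`, so these rows differ by
`λ₁^n (e₀ - e₁)`.
-/

/-- Posterior probability of root state `i` given leaf configuration `A`. -/
noncomputable def posterior {n : ℕ} {S : Type*} [Fintype S]
    (p : Fin n → S → ℝ) (i : Fin n) (A : S) : ℝ :=
  p i A / ∑ j, p j A

open Finset Matrix

section Posterior

variable {m : ℕ} {S : Type*} {p : Fin m → S → ℝ}

lemma eq_zero_of_sum_eq_zero (hp : ∀ i A, 0 ≤ p i A) {A : S} (hA : ∑ j, p j A = 0)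
    (i : Fin m) : p i A = 0 :=
  (sum_eq_zero_iff_of_nonneg fun j _ => hp j A).mp hA i (mem_univ i)

variable [Fintype S]

noncomputable def posteriorCorr (p : Fin m → S → ℝ) (i j : Fin m) : ℝ :=
  ∑ A, p i A * posterior p j A

lemma marginal_mul_posterior (hp : ∀ i A, 0 ≤ p i A) (i : Fin m) (A : S) :
    (∑ j, p j A) * posterior p i A = p i A := by
  by_cases hA : ∑ j, p j A = 0
  · simp [posterior, hA, eq_zero_of_sum_eq_zero hp hA i]
  · exact mul_div_cancel₀ _ hA

lemma sum_mul_posterior (hp : ∀ i A, 0 ≤ p i A) (i : Fin m) (A : S) :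
    ∑ j, p i A * posterior p j A = p i A := by
  by_cases hA : ∑ j, p j A = 0
  · simp [eq_zero_of_sum_eq_zero hp hA i]
  · simp only [← mul_sum, posterior, ← sum_div, div_self hA, mul_one]

lemma sum_posteriorCorr (hp : ∀ i A, 0 ≤ p i A) (i : Fin m) :
    ∑ j, posteriorCorr p i j = ∑ A, p i A := by
  simp only [posteriorCorr]
  rw [sum_comm]
  exact sum_congr rfl fun A _ => sum_mul_posterior hp i A

lemma sum_marginal_mul_sq_sub_posterior (hp : ∀ i A, 0 ≤ p i A) (i j : Fin m) :
    ∑ A, (∑ k, p k A) * (posterior p i A - posterior p j A) ^ 2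
      = posteriorCorr p i i + posteriorCorr p j j - 2 * posteriorCorr p i j := by
  simp only [posteriorCorr, mul_sum, ← sum_add_distrib, ← sum_sub_distrib]
  refine sum_congr rfl fun A _ => ?_
  rw [← marginal_mul_posterior hp i A, ← marginal_mul_posterior hp j A]
  ring

lemma two_mul_posteriorCorr_lt (hp : ∀ i A, 0 ≤ p i A) {i j : Fin m} (hij : p i ≠ p j) :
    2 * posteriorCorr p i j < posteriorCorr p i i + posteriorCorr p j j := by
  rw [← sub_pos, ← sum_marginal_mul_sq_sub_posterior hp]
  have hterm : ∀ A ∈ univ, 0 ≤ (∑ k, p k A) * (posterior p i A - posterior p j A) ^ 2 :=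
    fun A _ => mul_nonneg (sum_nonneg fun k _ => hp k A) (sq_nonneg _)
  refine (sum_nonneg hterm).lt_of_ne fun hzero => hij (funext fun A => ?_)
  rcases mul_eq_zero.mp ((sum_eq_zero_iff_of_nonneg hterm).mp hzero.symm A (mem_univ A))
    with hA | hA
  · rw [eq_zero_of_sum_eq_zero hp hA i, eq_zero_of_sum_eq_zero hp hA j]
  · rw [← marginal_mul_posterior hp i A, ← marginal_mul_posterior hp j A,
      sub_eq_zero.mp (pow_eq_zero_iff two_ne_zero |>.mp hA)]

lemma posteriorCorr_apply_perm {g : Fin m ≃ Fin m} {e : S ≃ S}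
    (he : ∀ i A, p (g i) (e A) = p i A) (i j : Fin m) :
    posteriorCorr p (g i) (g j) = posteriorCorr p i j := by
  have hmarg : ∀ A, ∑ k, p k (e A) = ∑ k, p k A := fun A => by
    rw [← g.sum_comp]
    simp only [he]
  rw [posteriorCorr, ← e.sum_comp]
  simp only [posteriorCorr, posterior, hmarg, he]

end Posterior

lemma Equiv.swap_apply_iff {α : Type*} [DecidableEq α] {P : α → Prop} {u v : α}
    (huv : P u ↔ P v) (i : α) : P (Equiv.swap u v i) ↔ P i := by
  rcases eq_or_ne i u with rfl | hu
  · rw [Equiv.swap_apply_left]; exact huv.symm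
  rcases eq_or_ne i v with rfl | hv
  · rw [Equiv.swap_apply_right]; exact huv
  · rw [Equiv.swap_apply_of_ne_of_ne hu hv]

lemma sum_fin_two_mul_eq {q : ℕ} (hq : 0 < q) {f : Fin (2 * q) → ℝ} {a b : ℝ}
    (ha : ∀ j : Fin (2 * q), 0 < (j : ℕ) → (j : ℕ) < q → f j = a)
    (hb : ∀ j : Fin (2 * q), q ≤ (j : ℕ) → f j = b) :
    ∑ j, f j = f ⟨0, by omega⟩ + ((q : ℝ) - 1) * a + q * b := by
  rw [sum_fin_eq_sum_range, show range (2 * q) = range (1 + (q - 1) + q) by congr 1; omega,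
    sum_range_add, sum_range_add]
  have hlow : ∀ m ∈ range (q - 1), (if h : 1 + m < 2 * q then f ⟨1 + m, h⟩ else 0) = a :=
    fun m hm => by
      have := mem_range.mp hm
      rw [dif_pos (by omega), ha _ (by simp) (by simp; omega)]
  have hhigh : ∀ m ∈ range q,
      (if h : 1 + (q - 1) + m < 2 * q then f ⟨1 + (q - 1) + m, h⟩ else 0) = b :=
    fun m hm => by
      have := mem_range.mp hm
      rw [dif_pos (by omega), hb _ (by simp; omega)]
  rw [sum_congr rfl hlow, sum_congr rfl hhigh]
  simp [hq, Nat.cast_sub (show 1 ≤ q by omega)]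

lemma Matrix.vecMul_pow_of_vecMul_eq_smul {ι R : Type*} [Fintype ι] [DecidableEq ι]
    [CommRing R] {M : Matrix ι ι R} {v : ι → R} {c : R} (hv : v ᵥ* M = c • v) (n : ℕ) :
    v ᵥ* (M ^ n) = c ^ n • v := by
  induction n with
  | zero => simp
  | succ n ih =>
    rw [pow_succ, ← vecMul_vecMul, ih, smul_vecMul, hv, smul_smul, pow_succ]

section BroadcastMatrix

variable (q : ℕ) (p₀ p₁ p₂ : ℝ)

def broadcastMatrix : Matrix (Fin (2 * q)) (Fin (2 * q)) ℝ :=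
  Matrix.of fun i j => if i = j then p₀ else if ((i : ℕ) < q ↔ (j : ℕ) < q) then p₁ else p₂

variable {q} {i j : Fin (2 * q)}

lemma vecMul_broadcastMatrix (hij : i ≠ j) (hsame : (i : ℕ) < q ↔ (j : ℕ) < q) :
    (Pi.single i 1 - Pi.single j 1) ᵥ* broadcastMatrix q p₀ p₁ p₂
      = (p₀ - p₁) • (Pi.single i 1 - Pi.single j 1 : Fin (2 * q) → ℝ) := by
  ext k
  simp only [sub_vecMul, single_vecMul, one_smul, Pi.sub_apply, Pi.smul_apply,
    row_apply, broadcastMatrix, of_apply, smul_eq_mul]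
  rcases eq_or_ne k i with rfl | hki
  · simp [hij, hij.symm, hsame.symm]
  rcases eq_or_ne k j with rfl | hkj
  · simp [hki, hij, hsame]
  · simp [hki, hkj, hki.symm, hkj.symm, ← hsame]

lemma broadcastMatrix_pow_sub (hij : i ≠ j) (hsame : (i : ℕ) < q ↔ (j : ℕ) < q) (n : ℕ) :
    (broadcastMatrix q p₀ p₁ p₂ ^ n) i i - (broadcastMatrix q p₀ p₁ p₂ ^ n) j i
      = (p₀ - p₁) ^ n := by
  have h := congrFun (vecMul_pow_of_vecMul_eq_smul
    (vecMul_broadcastMatrix p₀ p₁ p₂ hij hsame) n) i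
  simpa [sub_vecMul, single_vecMul, hij] using h

end BroadcastMatrix

/-- If `λ₁ = p₀ - p₁ ≠ 0` then `x_n + z_n > 0` in the symmetric `2q`-state
broadcast model: here the model at level `n` is encoded by the joint mass
function `p` of (root, level-`n` configuration), with uniform root, symmetry
under all category-structure-preserving permutations of states, and a leaf map
`ℓ` whose conditional law given the root is the `n`-th matrix power `M^n` of the
structured transition matrix; `x_n = E[f_n(1,σ¹(n))] - 1/(2q)` and
`z_n = E[f_n(q+1,σ¹(n))] - 1/(2q)`. -/
theorem stmt16 (q n : ℕ) (hq : 2 ≤ q) (p₀ p₁ p₂ : ℝ)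
    (hlam : p₀ - p₁ ≠ 0)
    {S : Type*} [Fintype S]
    (p : Fin (2 * q) → S → ℝ) (x z : ℝ)
    (hp : ∀ i A, 0 ≤ p i A)
    (hroot : ∀ i, ∑ A, p i A = 1 / (2 * q))
    (hsym : ∀ g : Equiv.Perm (Fin (2 * q)),
      (∀ i j : Fin (2 * q),
        ((((g i : ℕ) < q)) ↔ (((g j : ℕ) < q))) ↔ ((((i : ℕ) < q)) ↔ (((j : ℕ) < q)))) →
      ∃ e : S ≃ S, ∀ i A, p (g i) (e A) = p i A)
    (ℓ : S → Fin (2 * q))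
    (hleaf : ∀ i k : Fin (2 * q),
      (2 * q : ℝ) * ∑ A ∈ Finset.univ.filter (fun A => ℓ A = k), p i A
        = ((Matrix.of (fun i j : Fin (2 * q) =>
            if i = j then p₀
            else if (((i : ℕ) < q) ↔ ((j : ℕ) < q)) then p₁ else p₂)) ^ n) i k)
    (hx : x = (2 * q : ℝ) * (∑ A, p ⟨0, by omega⟩ A * posterior p ⟨0, by omega⟩ A)
      - 1 / (2 * q))
    (hz : z = (2 * q : ℝ) * (∑ A, p ⟨0, by omega⟩ A * posterior p ⟨q, by omega⟩ A)
      - 1 / (2 * q)) :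
    0 < x + z := by
  set i₀ : Fin (2 * q) := ⟨0, by omega⟩
  set i₁ : Fin (2 * q) := ⟨1, by omega⟩
  set iq : Fin (2 * q) := ⟨q, by omega⟩
  have hi₀₁ : i₀ ≠ i₁ := Fin.ne_of_val_ne zero_ne_one
  have hswap : ∀ u v : Fin (2 * q), ((u : ℕ) < q ↔ (v : ℕ) < q) → ∀ i j,
      posteriorCorr p (Equiv.swap u v i) (Equiv.swap u v j) = posteriorCorr p i j := by
    intro u v huv
    have hg : ∀ i, ((Equiv.swap u v i : ℕ) < q ↔ (i : ℕ) < q) :=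
      Equiv.swap_apply_iff (P := fun k : Fin (2 * q) => (k : ℕ) < q) huv
    obtain ⟨e, he⟩ := hsym _ fun i j => by rw [hg i, hg j]
    exact posteriorCorr_apply_perm he
  have hrow : posteriorCorr p i₀ i₀ + ((q : ℝ) - 1) * posteriorCorr p i₀ i₁
      + q * posteriorCorr p i₀ iq = 1 / (2 * q) := by
    rw [← hroot i₀, ← sum_posteriorCorr hp, sum_fin_two_mul_eq (by omega)]
    · intro j hj₀ hjq
      have h := hswap i₁ j (iff_of_true (show 1 < q by omega) hjq) i₀ i₁
      rwa [Equiv.swap_apply_of_ne_of_ne hi₀₁ (Fin.ne_of_val_ne (show 0 ≠ (j : ℕ) by omega)),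
        Equiv.swap_apply_left] at h
    · intro j hj
      have h := hswap iq j (iff_of_false (show ¬q < q by omega) (by omega)) i₀ iq
      rwa [Equiv.swap_apply_of_ne_of_ne (Fin.ne_of_val_ne (show 0 ≠ q by omega))
        (Fin.ne_of_val_ne (show 0 ≠ (j : ℕ) by omega)), Equiv.swap_apply_left] at h
  have hxz : x + z = 2 * ((q : ℝ) - 1) * (posteriorCorr p i₀ i₀ - posteriorCorr p i₀ i₁) := by
    change x = 2 * q * posteriorCorr p i₀ i₀ - 1 / (2 * q) at hx
    change z = 2 * q * posteriorCorr p i₀ iq - 1 / (2 * q) at hz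
    rw [hx, hz]
    linear_combination 2 * hrow
  have hsame₀₁ : (i₀ : ℕ) < q ↔ (i₁ : ℕ) < q :=
    iff_of_true (show 0 < q by omega) (show 1 < q by omega)
  have hdist : p i₀ ≠ p i₁ := fun h => by
    have hdiff := broadcastMatrix_pow_sub p₀ p₁ p₂ hi₀₁ hsame₀₁ n
    rw [broadcastMatrix, ← hleaf, ← hleaf, h, sub_self] at hdiff
    exact pow_ne_zero n hlam hdiff.symm
  have hcorr₁₁ : posteriorCorr p i₁ i₁ = posteriorCorr p i₀ i₀ := by
    simpa using hswap i₀ i₁ hsame₀₁ i₀ i₀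
  have hlt := two_mul_posteriorCorr_lt hp hdist
  rw [hxz]
  apply mul_pos
  · have : (2 : ℝ) ≤ q := by exact_mod_cast hq
    linarith
  · linarith
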